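/- arXiv:1409.5212 — 2 statements merged into one kernel-verified Lean document; each statement's English description precedes it below -/
import Mathlib

section
/- Let H₁ and H₂ be complex Hilbert spaces, and let R_s ⊆ R be subspaces of H₂ with R_s dense in H₂. Assume: (i) R carries a norm ‖·‖_R for which there exists c > 0 with ‖u‖_{H₂} ≤ c‖u‖_R for all u ∈ R; let R' denote the continuous dual space of (R, ‖·‖_R), and let ι : H₂ → R' be the map sending z ∈ H₂ to the functional v ↦ ⟨z, v⟩_{H₂} on R (which is bounded by (i)); (ii) there is a pairing ⟨·,·⟩ : R' × R → ℂ, linear in the first variable and continuous in each variable separately, which extends the H₂-inner product in the sense that ⟨ι(z), v⟩ = ⟨z, v⟩_{H₂} for all z ∈ H₂ and v ∈ R; (iii) T is an unbounded operator from H₁ to H₂ and T̃ : H₁ → R' is an everywhere-defined linear map with T̃u = ι(Tu) for all u ∈ D(T); (iv) S is an unbounded operator from H₂ to H₁ with R_s ⊆ D(S) ⊆ R, and D(S) is dense both in (H₂, ‖·‖_{H₂}) and in (R, ‖·‖_R); (v) ⟨u, Sv⟩_{H₁} = ⟨T̃u, v⟩ for all u ∈ H₁ and v ∈ D(S). Then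 the domain of the adjoint S* satisfies D(S*) = {u ∈ H₁ : T̃u ∈ ι(H₂)}, i.e. u ∈ D(S*) if and only if there exists z ∈ H₂ with T̃u = ι(z). -/
/-!
On `j⁻¹ D(S)` the functional `T̃ u` is `w ↦ ⟪u, S (j w)⟫` and `ι z` is `w ↦ ⟪z, j w⟫`, so
`T̃ u = ι z` there says exactly that `z` satisfies the defining identity of `S* u`. Since both
functionals are continuous on `R` and `j⁻¹ D(S)` is dense in `R`, agreement there is agreement
everywhere.
-/

open scoped InnerProductSpace

namespace LinearPMap

variable {H₁ H₂ W : Type*}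
  [NormedAddCommGroup H₁] [InnerProductSpace ℂ H₁]
  [NormedAddCommGroup H₂] [InnerProductSpace ℂ H₂]
  [NormedAddCommGroup W] [NormedSpace ℂ W]
  {j : W →ₗ[ℂ] H₂} {ι : H₂ → StrongDual ℂ W} {S : H₂ →ₗ.[ℂ] H₁} {u : H₁} {f : StrongDual ℂ W}

theorem mem_adjoint_domain_of_pairing_eq [CompleteSpace H₂]
    (hι : ∀ (z : H₂) (w : W), ι z w = ⟪z, j w⟫_ℂ)
    (hSR : (S.domain : Set H₂) ⊆ Set.range j)
    (hpair : ∀ (w : W) (hw : j w ∈ S.domain), ⟪u, S ⟨j w, hw⟩⟫_ℂ = f w)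
    {z : H₂} (hz : f = ι z) : u ∈ S†.domain := by
  refine mem_adjoint_domain_of_exists u ⟨z, fun ⟨v, hv⟩ => ?_⟩
  obtain ⟨w, rfl⟩ := hSR hv
  rw [hpair, hz, hι]

theorem pairing_eq_adjoint [CompleteSpace H₂]
    (hι : ∀ (z : H₂) (w : W), ι z w = ⟪z, j w⟫_ℂ)
    (hS_dense : Dense (S.domain : Set H₂))
    (hS_denseR : Dense (j ⁻¹' (S.domain : Set H₂)))
    (hpair : ∀ (w : W) (hw : j w ∈ S.domain), ⟪u, S ⟨j w, hw⟩⟫_ℂ = f w)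
    (hu : u ∈ S†.domain) : f = ι (S† ⟨u, hu⟩) := by
  refine ContinuousLinearMap.coeFn_injective <|
    Continuous.ext_on hS_denseR f.continuous (ι _).continuous fun w hw => ?_
  calc f w = ⟪u, S ⟨j w, hw⟩⟫_ℂ := (hpair w hw).symm
    _ = ⟪S† ⟨u, hu⟩, j w⟫_ℂ := (adjoint_isFormalAdjoint hS_dense ⟨u, hu⟩ ⟨j w, hw⟩).symm
    _ = ι (S† ⟨u, hu⟩) w := (hι _ w).symm

end LinearPMap

theorem adjoint_domain_eq_general {H₁ H₂ W : Type*}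
    [NormedAddCommGroup H₁] [InnerProductSpace ℂ H₁]
    [NormedAddCommGroup H₂] [InnerProductSpace ℂ H₂] [CompleteSpace H₂]
    [NormedAddCommGroup W] [NormedSpace ℂ W]
    (j : W →ₗ[ℂ] H₂)
    -- the map `ι : H₂ → R'`
    (ι : H₂ → StrongDual ℂ W)
    -- (ii): the pairing extends the `H₂`-inner product via `ι`
    (hι : ∀ (z : H₂) (w : W), ι z w = inner ℂ z (j w))
    -- (iii)
    (Tt : H₁ →ₗ⋆[ℂ] StrongDual ℂ W)
    -- (iv)
    (S : H₂ →ₗ.[ℂ] H₁)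
    (hSR : (S.domain : Set H₂) ⊆ Set.range j)
    (hS_dense : Dense (S.domain : Set H₂))
    (hS_denseR : Dense (j ⁻¹' (S.domain : Set H₂)))
    -- (v)
    (hpair : ∀ (u : H₁) (w : W) (hw : j w ∈ S.domain),
      (inner ℂ u (S ⟨j w, hw⟩) : ℂ) = Tt u w) :
    ∀ u : H₁, u ∈ S.adjoint.domain ↔ ∃ z : H₂, Tt u = ι z := fun u =>
  ⟨fun hu => ⟨_, LinearPMap.pairing_eq_adjoint hι hS_dense hS_denseR (hpair u) hu⟩,
    fun ⟨_, hz⟩ => LinearPMap.mem_adjoint_domain_of_pairing_eq hι hSR (hpair u) hz⟩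

/-- **Abstract adjoint-domain lemma** (Lemma 3.1 of the paper).

Let `H₁` and `H₂` be complex Hilbert spaces.  The subspace `R ⊆ H₂`, equipped with its own
norm `‖·‖_R`, is realised as the range of an injective linear map `j : W →ₗ[ℂ] H₂` from a
normed space `W` (so the norm of `W` is `‖·‖_R`), and its continuous dual `R'` is
`NormedSpace.Dual ℂ W`; the pairing `⟨·,·⟩ : R' × R → ℂ` is the canonical evaluation
pairing, which is linear in the first variable and continuous in each variable separately.

Assume:
* (i)  there is `c > 0` with `‖u‖_{H₂} ≤ c ‖u‖_R` for `u ∈ R`, i.e. `‖j w‖ ≤ c‖w‖`;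
* `ι : H₂ → R'` sends `z` to the functional `v ↦ ⟪z, v⟫_{H₂}` on `R` (bounded by (i));
* (ii) the evaluation pairing extends the `H₂`-inner product: `⟨ι z, v⟩ = ⟪z, v⟫_{H₂}`
  for `z ∈ H₂`, `v ∈ R` (hypothesis `hι`);
* (iii) `T` is an unbounded operator from `H₁` to `H₂` and `T̃ : H₁ → R'` is an
  everywhere-defined (conjugate-)linear map with `T̃ u = ι (T u)` for `u ∈ D(T)`;
* `R_s ⊆ R` is a subspace of `H₂` that is dense in `H₂`;
* (iv) `S` is an unbounded operator from `H₂` to `H₁` with `R_s ⊆ D(S) ⊆ R`, and `D(S)` is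
  dense both in `(H₂, ‖·‖_{H₂})` and in `(R, ‖·‖_R)`;
* (v)  `⟪u, S v⟫_{H₁} = ⟨T̃ u, v⟩` for all `u ∈ H₁` and `v ∈ D(S)`.

Then `D(S*) = {u ∈ H₁ : T̃ u ∈ ι(H₂)}`, i.e. `u ∈ D(S*)` iff `T̃ u = ι z` for some
`z ∈ H₂`. -/
theorem adjoint_domain_eq {H₁ H₂ W : Type*}
    [NormedAddCommGroup H₁] [InnerProductSpace ℂ H₁] [CompleteSpace H₁]
    [NormedAddCommGroup H₂] [InnerProductSpace ℂ H₂] [CompleteSpace H₂]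
    [NormedAddCommGroup W] [NormedSpace ℂ W]
    (j : W →ₗ[ℂ] H₂) (hj : Function.Injective j)
    -- (i)
    (c : ℝ) (hc : 0 < c) (hjc : ∀ w : W, ‖j w‖ ≤ c * ‖w‖)
    -- the map `ι : H₂ → R'`
    (ι : H₂ → StrongDual ℂ W)
    -- (ii): the pairing extends the `H₂`-inner product via `ι`
    (hι : ∀ (z : H₂) (w : W), ι z w = inner ℂ z (j w))
    -- (iii)
    (T : H₁ →ₗ.[ℂ] H₂) (Tt : H₁ →ₗ⋆[ℂ] StrongDual ℂ W)
    (hTt : ∀ u : T.domain, Tt u = ι (T u))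
    -- `R_s`: a subspace of `H₂`, contained in `R`, dense in `H₂`
    (Rs : Submodule ℂ H₂)
    (hRs_dense : Dense (Rs : Set H₂))
    (hRsR : (Rs : Set H₂) ⊆ Set.range j)
    -- (iv)
    (S : H₂ →ₗ.[ℂ] H₁)
    (hRsS : Rs ≤ S.domain)
    (hSR : (S.domain : Set H₂) ⊆ Set.range j)
    (hS_dense : Dense (S.domain : Set H₂))
    (hS_denseR : Dense (j ⁻¹' (S.domain : Set H₂)))
    -- (v)
    (hpair : ∀ (u : H₁) (w : W) (hw : j w ∈ S.domain),
      (inner ℂ u (S ⟨j w, hw⟩) : ℂ) = Tt u w) :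
    ∀ u : H₁, u ∈ S.adjoint.domain ↔ ∃ z : H₂, Tt u = ι z :=
  adjoint_domain_eq_general j ι hι Tt S hSR hS_dense hS_denseR hpair
end

section
/- Let T and S be closed densely defined unbounded operators from H₁ to H₂ with T ⊆ S. If the operator T*S (with domain {u ∈ D(S) : Su ∈ D(T*)}) is self-adjoint, then T*T = T*S = S*S; consequently D(T) = D(S) and T = S. -/
/-- Composition of two partially defined linear operators `g ∘ f` with the natural
domain `{x ∈ D(f) : f x ∈ D(g)}`, acting by `x ↦ g (f x)`. -/
noncomputable def LinearPMap.pcomp {R E F G : Type*} [CommRing R]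
    [AddCommGroup E] [Module R E] [AddCommGroup F] [Module R F]
    [AddCommGroup G] [Module R G] (g : F →ₗ.[R] G) (f : E →ₗ.[R] F) :
    E →ₗ.[R] G :=
  g.comp (f.domRestrict ((Submodule.comap f.toFun g.domain).map f.domain.subtype))
    (fun x => by
      obtain ⟨hxD, hxf⟩ := x.2
      obtain ⟨y, hy, hyx⟩ := hxD
      have hx : f.domRestrict _ x = f y := LinearPMap.domRestrict_apply hyx.symm
      rw [hx]
      exact hy)


/-!
Since `T ≤ S` and hence `S† ≤ T†`, we have `T†T ≤ T†S` and `S†S ≤ T†S`. By von Neumann's theorem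
`T†T` and `S†S` are self-adjoint: `1 + T†T` is onto (decompose `(f, 0)` along the graph of `T` in
`H₁ ⊕ H₂`), and a nonnegative symmetric operator with `1 + A` onto is self-adjoint. Self-adjoint
operators have no proper self-adjoint extensions, so all three operators coincide. Finally, a
vector `(v, S v)` of the graph of `S` orthogonal to the graph of `T` satisfies `T†S v = -v`, that
is `S†S v = -v`, which forces `v = 0` by positivity; hence the closed graph of `T` is all of the
graph of `S`.
-/

open scoped InnerProductSpace

namespace LinearPMap

section Composition

variable {R E F G : Type*} [CommRing R] [AddCommGroup E] [Module R E]
  [AddCommGroup F] [Module R F] [AddCommGroup G] [Module R G]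
  {g g' : F →ₗ.[R] G} {f f' : E →ₗ.[R] F}

theorem mem_pcomp_domain_iff {x : E} :
    x ∈ (g.pcomp f).domain ↔ ∃ hx : x ∈ f.domain, f ⟨x, hx⟩ ∈ g.domain := by
  change x ∈ (Submodule.comap f.toFun g.domain).map f.domain.subtype ⊓ f.domain ↔ _
  constructor
  · rintro ⟨⟨y, hy, rfl⟩, -⟩
    exact ⟨y.2, hy⟩
  · rintro ⟨hx, hfx⟩
    exact ⟨⟨⟨x, hx⟩, hfx, rfl⟩, hx⟩

theorem pcomp_apply (x : (g.pcomp f).domain) (hx : (x : E) ∈ f.domain)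
    (hfx : f ⟨x, hx⟩ ∈ g.domain) : g.pcomp f x = g ⟨f ⟨x, hx⟩, hfx⟩ :=
  congrArg g (Subtype.ext (domRestrict_apply rfl))

theorem pcomp_mono_left (h : g ≤ g') : g.pcomp f ≤ g'.pcomp f := by
  refine ⟨fun x hx => ?_, fun x y hxy => ?_⟩
  · obtain ⟨hxf, hfx⟩ := mem_pcomp_domain_iff.mp hx
    exact mem_pcomp_domain_iff.mpr ⟨hxf, h.1 hfx⟩
  · obtain ⟨hxf, hfx⟩ := mem_pcomp_domain_iff.mp x.2
    obtain ⟨hyf, hfy⟩ := mem_pcomp_domain_iff.mp y.2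
    rw [pcomp_apply x hxf hfx, pcomp_apply y hyf hfy]
    exact h.2 (congrArg (fun z : f.domain => f z) (Subtype.ext hxy))

theorem pcomp_mono_right (h : f ≤ f') : g.pcomp f ≤ g.pcomp f' := by
  refine ⟨fun x hx => ?_, fun x y hxy => ?_⟩
  · obtain ⟨hxf, hfx⟩ := mem_pcomp_domain_iff.mp hx
    have hf'x : f' ⟨x, h.1 hxf⟩ = f ⟨x, hxf⟩ := (h.2 rfl).symm
    exact mem_pcomp_domain_iff.mpr ⟨h.1 hxf, hf'x ▸ hfx⟩
  · obtain ⟨hxf, hfx⟩ := mem_pcomp_domain_iff.mp x.2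
    obtain ⟨hyf, hfy⟩ := mem_pcomp_domain_iff.mp y.2
    rw [pcomp_apply x hxf hfx, pcomp_apply y hyf hfy]
    exact congrArg g (Subtype.ext (h.2 hxy))

end Composition

variable {E F : Type*} [NormedAddCommGroup E] [InnerProductSpace ℂ E]
  [NormedAddCommGroup F] [InnerProductSpace ℂ F]

theorem adjoint_antitone [CompleteSpace E] {T S : E →ₗ.[ℂ] F} (hT : Dense (T.domain : Set E))
    (hS : Dense (S.domain : Set E)) (h : T ≤ S) : S† ≤ T† := by
  refine IsFormalAdjoint.le_adjoint hT fun x y => ?_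
  obtain ⟨x', hx', hfx'⟩ := exists_of_le h x
  rw [hfx', hx']
  exact (adjoint_isFormalAdjoint hS).symm x' y

theorem _root_.IsSelfAdjoint.eq_of_le [CompleteSpace E] {A B : E →ₗ.[ℂ] E}
    (hA : IsSelfAdjoint A) (hB : IsSelfAdjoint B) (h : A ≤ B) : A = B := by
  have hBA := adjoint_antitone hA.dense_domain hB.dense_domain h
  rw [isSelfAdjoint_def.mp hA, isSelfAdjoint_def.mp hB] at hBA
  exact le_antisymm h hBA

-- `T.graph` carries the product topology but no inner product; orthogonal complements of graphs
-- are taken in the Hilbert sum `WithLp 2 (E × F)`.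
def graphLp (T : E →ₗ.[ℂ] F) : Submodule ℂ (WithLp 2 (E × F)) :=
  T.graph.comap (WithLp.linearEquiv 2 ℂ (E × F)).toLinearMap

theorem mem_graphLp_iff {T : E →ₗ.[ℂ] F} {z : WithLp 2 (E × F)} :
    z ∈ T.graphLp ↔ ∃ y : T.domain, (y : E) = z.fst ∧ T y = z.snd :=
  T.mem_graph_iff

theorem graphLp_le_graphLp_iff {T S : E →ₗ.[ℂ] F} : T.graphLp ≤ S.graphLp ↔ T ≤ S :=
  (Submodule.comap_le_comap_iff_of_surjective
    (WithLp.linearEquiv 2 ℂ (E × F)).surjective).trans le_graph_iff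

theorem hasOrthogonalProjection_graphLp [CompleteSpace E] [CompleteSpace F] {T : E →ₗ.[ℂ] F}
    (hT : T.IsClosed) : T.graphLp.HasOrthogonalProjection :=
  have : CompleteSpace T.graphLp :=
    (hT.preimage (WithLp.prod_continuous_ofLp 2 E F)).completeSpace_coe
  inferInstance

theorem exists_adjoint_apply_eq_of_mem_orthogonal_graphLp [CompleteSpace E] {T : E →ₗ.[ℂ] F}
    (hT : Dense (T.domain : Set E)) {a : E} {b : F} (h : WithLp.toLp 2 (a, b) ∈ T.graphLpᗮ) :
    ∃ hb : b ∈ T†.domain, T† ⟨b, hb⟩ = -a := by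
  have hmem : (b, -a) ∈ T†.graph := by
    rw [adjoint_graph_eq_graph_adjoint hT, Submodule.mem_adjoint_iff]
    intro x y hxy
    have := (Submodule.mem_orthogonal _ _).mp h (WithLp.toLp 2 (x, y)) hxy
    rw [WithLp.prod_inner_apply] at this
    simpa [inner_neg_right, sub_neg_eq_add, add_comm] using this
  obtain ⟨⟨y, hy⟩, rfl, hTy⟩ := (mem_graph_iff _).mp hmem
  exact ⟨hy, hTy⟩

theorem inner_adjoint_pcomp_self_apply [CompleteSpace E] {T : E →ₗ.[ℂ] F}
    (hT : Dense (T.domain : Set E)) (x : (T†.pcomp T).domain) (hx : (x : E) ∈ T.domain)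
    (y : T.domain) : ⟪T†.pcomp T x, (y : E)⟫_ℂ = ⟪T ⟨x, hx⟩, T y⟫_ℂ := by
  rw [pcomp_apply x hx ((mem_pcomp_domain_iff.mp x.2).2)]
  exact adjoint_isFormalAdjoint hT _ y

theorem re_inner_adjoint_pcomp_self_apply_nonneg [CompleteSpace E] {T : E →ₗ.[ℂ] F}
    (hT : Dense (T.domain : Set E)) (x : (T†.pcomp T).domain) :
    0 ≤ RCLike.re ⟪T†.pcomp T x, (x : E)⟫_ℂ := by
  obtain ⟨hx, -⟩ := mem_pcomp_domain_iff.mp x.2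
  rw [inner_adjoint_pcomp_self_apply hT x hx ⟨x, hx⟩]
  exact inner_self_nonneg

theorem exists_add_adjoint_pcomp_self_apply_eq [CompleteSpace E] [CompleteSpace F]
    {T : E →ₗ.[ℂ] F} (hT : Dense (T.domain : Set E)) (hTc : T.IsClosed) (f : E) :
    ∃ x : (T†.pcomp T).domain, (x : E) + T†.pcomp T x = f := by
  have := hasOrthogonalProjection_graphLp hTc
  -- Split `(f, 0) = (u, T u) + (a, b)` along `graph T ⊕ (graph T)ᗮ`.
  obtain ⟨k, hk, ⟨a, b⟩, hab, hkw⟩ :=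
    Submodule.exists_add_mem_mem_orthogonal (K := T.graphLp) (WithLp.toLp 2 (f, (0 : F)))
  obtain ⟨u, hu, hTu⟩ := mem_graphLp_iff.mp hk
  obtain ⟨hb, hT'b⟩ := exists_adjoint_apply_eq_of_mem_orthogonal_graphLp hT hab
  have hf : f = k.fst + a := congrArg (·.fst) hkw
  have h0 : 0 = k.snd + b := congrArg (·.snd) hkw
  have ha : a = f - u := by
    rw [hu, hf, add_sub_cancel_left]
  have hb' : b = -T u := by
    rw [hTu, eq_neg_iff_add_eq_zero, add_comm, ← h0]
  subst ha hb'
  have hTu_mem : T u ∈ T†.domain := neg_neg (T u) ▸ neg_mem hb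
  have hT'Tu : T† ⟨T u, hTu_mem⟩ = f - u := by
    have : (⟨T u, hTu_mem⟩ : T†.domain) = -⟨-T u, hb⟩ := Subtype.ext (neg_neg _).symm
    rw [this, map_neg, hT'b, neg_neg]
  refine ⟨⟨u, mem_pcomp_domain_iff.mpr ⟨u.2, hTu_mem⟩⟩, ?_⟩
  rw [pcomp_apply _ u.2 hTu_mem, hT'Tu, add_sub_cancel]

theorem dense_domain_of_forall_exists_add_apply_eq [CompleteSpace E] {A : E →ₗ.[ℂ] E}
    (hsurj : ∀ f : E, ∃ x : A.domain, (x : E) + A x = f)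
    (hpos : ∀ x : A.domain, 0 ≤ RCLike.re ⟪A x, (x : E)⟫_ℂ) : Dense (A.domain : Set E) := by
  rw [Submodule.dense_iff_topologicalClosure_eq_top,
    Submodule.topologicalClosure_eq_top_iff (𝕜 := ℂ), Submodule.eq_bot_iff]
  intro f hf
  obtain ⟨x, rfl⟩ := hsurj f
  have horth : ⟪(x : E) + A x, (x : E)⟫_ℂ = 0 := (Submodule.mem_orthogonal' _ _).mp hf x x.2
  have hnorm : ‖(x : E)‖ ^ 2 + RCLike.re ⟪A x, (x : E)⟫_ℂ = 0 := by
    rw [← inner_self_eq_norm_sq (𝕜 := ℂ), ← RCLike.re.map_add, ← inner_add_left, horth,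
      RCLike.zero_re]
  have hx : x = 0 := Subtype.ext (norm_eq_zero.mp (by nlinarith [hpos x, norm_nonneg (x : E)]))
  rw [hx, map_zero, ZeroMemClass.coe_zero, add_zero]

theorem isSelfAdjoint_of_forall_exists_add_apply_eq [CompleteSpace E] {A : E →ₗ.[ℂ] E}
    (hsurj : ∀ f : E, ∃ x : A.domain, (x : E) + A x = f) (hA : Dense (A.domain : Set E))
    (hsymm : A.IsFormalAdjoint A) : IsSelfAdjoint A := by
  have hle : A ≤ A† := hsymm.le_adjoint hA
  have hker : ∀ y : A†.domain, (y : E) + A† y = 0 → y = 0 := by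
    intro y hy
    have hperp : ∀ f : E, ⟪(y : E), f⟫_ℂ = 0 := by
      intro f
      obtain ⟨z, rfl⟩ := hsurj f
      rw [inner_add_right, ← adjoint_isFormalAdjoint hA y z, ← inner_add_left, hy,
        inner_zero_left]
    exact Subtype.ext (inner_self_eq_zero.mp (hperp y))
  have hdom : A†.domain ≤ A.domain := by
    intro v hv
    obtain ⟨u, hu⟩ := hsurj (v + A† ⟨v, hv⟩)
    have hAu : A† ⟨u, hle.1 u.2⟩ = A u := (hle.2 rfl).symm
    have hvu := hker (⟨v, hv⟩ - ⟨u, hle.1 u.2⟩) (by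
      rw [map_sub, hAu, Submodule.coe_sub, sub_add_sub_comm]
      exact sub_eq_zero.mpr hu.symm)
    rw [sub_eq_zero, Subtype.ext_iff] at hvu
    rw [show v = u from hvu]
    exact u.2
  exact isSelfAdjoint_def.mpr (eq_of_le_of_domain_eq hle (le_antisymm hle.1 hdom)).symm

theorem isSelfAdjoint_adjoint_pcomp_self [CompleteSpace E] [CompleteSpace F]
    {T : E →ₗ.[ℂ] F} (hT : Dense (T.domain : Set E)) (hTc : T.IsClosed) :
    IsSelfAdjoint (T†.pcomp T) := by
  have hsurj := exists_add_adjoint_pcomp_self_apply_eq hT hTc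
  have hsymm : (T†.pcomp T).IsFormalAdjoint (T†.pcomp T) := by
    intro x y
    obtain ⟨hx, -⟩ := mem_pcomp_domain_iff.mp x.2
    obtain ⟨hy, -⟩ := mem_pcomp_domain_iff.mp y.2
    rw [inner_adjoint_pcomp_self_apply hT x hx ⟨y, hy⟩, ← inner_conj_symm (x : E),
      inner_adjoint_pcomp_self_apply hT y hy ⟨x, hx⟩, inner_conj_symm]
  exact isSelfAdjoint_of_forall_exists_add_apply_eq hsurj
    (dense_domain_of_forall_exists_add_apply_eq hsurj
      (re_inner_adjoint_pcomp_self_apply_nonneg hT)) hsymm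

theorem eq_of_le_of_adjoint_pcomp_eq [CompleteSpace E] [CompleteSpace F] {T S : E →ₗ.[ℂ] F}
    (hT : Dense (T.domain : Set E)) (hS : Dense (S.domain : Set E)) (hTc : T.IsClosed)
    (hTS : T ≤ S) (h : T†.pcomp S = S†.pcomp S) : T = S := by
  have := hasOrthogonalProjection_graphLp hTc
  suffices hperp : T.graphLpᗮ ⊓ S.graphLp = ⊥ by
    have hgraph := Submodule.sup_orthogonal_inf_of_hasOrthogonalProjection
      (graphLp_le_graphLp_iff.mpr hTS)
    rw [hperp, sup_bot_eq] at hgraph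
    exact le_antisymm hTS (graphLp_le_graphLp_iff.mp hgraph.ge)
  refine (Submodule.eq_bot_iff _).mpr ?_
  rintro ⟨a, b⟩ ⟨hwT, hwS⟩
  obtain ⟨v, hv, hSv⟩ := mem_graphLp_iff.mp hwS
  change (v : E) = a at hv
  change S v = b at hSv
  subst hv hSv
  -- `(v, S v) ⊥ graph T` says `T† S v = -v`, i.e. `v` is a `-1`-eigenvector of `S† S ≥ 0`.
  obtain ⟨hSv_mem, hT'Sv⟩ := exists_adjoint_apply_eq_of_mem_orthogonal_graphLp hT hwT
  have hvTS : (v : E) ∈ (T†.pcomp S).domain := mem_pcomp_domain_iff.mpr ⟨v.2, hSv_mem⟩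
  have hvSS : (v : E) ∈ (S†.pcomp S).domain := h ▸ hvTS
  have hSSv : S†.pcomp S ⟨v, hvSS⟩ = -(v : E) := by
    rw [← h.le.2 (x := ⟨v, hvTS⟩) rfl, pcomp_apply _ v.2 hSv_mem, hT'Sv]
  have hv0 : v = 0 := by
    have hpos : 0 ≤ RCLike.re ⟪-(v : E), (v : E)⟫_ℂ :=
      hSSv ▸ re_inner_adjoint_pcomp_self_apply_nonneg hS ⟨v, hvSS⟩
    rw [inner_neg_left, _root_.map_neg, inner_self_eq_norm_sq, neg_nonneg] at hpos
    exact Subtype.ext (norm_eq_zero.mp (by nlinarith [norm_nonneg (v : E)]))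
  simp [hv0]

end LinearPMap

open LinearPMap

/-- Let `T` and `S` be closed densely defined unbounded operators from `H₁` to `H₂` with
`T ⊆ S`.  If the Gaffney-type operator `T*S` (with its natural domain
`{u ∈ D(S) : Su ∈ D(T*)}`) is self-adjoint, then `T*T = T*S = S*S`; consequently
`D(T) = D(S)` and `T = S`. -/
theorem selfAdjoint_gaffney_implies_eq {H₁ H₂ : Type*}
    [NormedAddCommGroup H₁] [InnerProductSpace ℂ H₁] [CompleteSpace H₁]
    [NormedAddCommGroup H₂] [InnerProductSpace ℂ H₂] [CompleteSpace H₂]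
    (T S : H₁ →ₗ.[ℂ] H₂)
    (hTclosed : T.IsClosed) (hSclosed : S.IsClosed)
    (hTdense : Dense (T.domain : Set H₁)) (hSdense : Dense (S.domain : Set H₁))
    (hTS : T ≤ S)
    (hG : IsSelfAdjoint (T.adjoint.pcomp S)) :
    T.adjoint.pcomp T = T.adjoint.pcomp S ∧
      T.adjoint.pcomp S = S.adjoint.pcomp S ∧
      T.domain = S.domain ∧ T = S := by
  have hTT : T.adjoint.pcomp T = T.adjoint.pcomp S :=
    (isSelfAdjoint_adjoint_pcomp_self hTdense hTclosed).eq_of_le hG (pcomp_mono_right hTS)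
  have hSS : S.adjoint.pcomp S = T.adjoint.pcomp S :=
    (isSelfAdjoint_adjoint_pcomp_self hSdense hSclosed).eq_of_le hG
      (pcomp_mono_left (adjoint_antitone hTdense hSdense hTS))
  have hTeqS : T = S := eq_of_le_of_adjoint_pcomp_eq hTdense hSdense hTclosed hTS hSS.symm
  exact ⟨hTT, hSS.symm, congrArg LinearPMap.domain hTeqS, hTeqS⟩
end
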